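/- arXiv:1506.07645 — 5 statements merged into one kernel-verified Lean document; each statement's English description precedes it below -/
import Mathlib

section
/- For every odd integer N_p0 with 1 ≤ N_p0 ≤ 3^{m-1}, the maximum of C_sum(p) over p ∈ Ω(N_p0) equals C_0 + d·( χ + ((N_p0 − 1)/2 − (3^χ − 1)/2)·3^{-χ} ), where χ = χ(N_p0). -/
/-- A pilot assignment vector `p = (p_0, …, p_{m-1})` is valid if `0 ≤ p_i ≤ 3^i`
for every `i` and `Σ_i p_i · 3^{-i} = 1`. -/
def validP {m : ℕ} (p : Fin m → ℤ) : Prop :=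
  (∀ i, 0 ≤ p i ∧ p i ≤ 3 ^ (i : ℕ)) ∧
  (∑ i, (p i : ℝ) / 3 ^ (i : ℕ)) = 1

/-- The pilot length `N_pil(p) = Σ_i p_i`. -/
def Npil {m : ℕ} (p : Fin m → ℤ) : ℤ := ∑ i, p i

/-- The per-cell sum rate `C_sum(p) = Σ_i 3^{-i}·p_i·C_i` with `C_i = C_0 + i·d`. -/
noncomputable def Csum {m : ℕ} (C0 d : ℝ) (p : Fin m → ℤ) : ℝ :=
  ∑ i, (p i : ℝ) / 3 ^ (i : ℕ) * (C0 + (i : ℕ) * d)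

/-- `χ(N_p0) = min{k ∈ ℕ : Σ_{i=0}^{k} 3^i > (N_p0 - 1)/2}`. -/
noncomputable def chiN (N : ℤ) : ℕ :=
  sInf {k : ℕ | (N - 1) / 2 < ∑ i ∈ Finset.range (k + 1), (3 : ℤ) ^ i}

/-- The closed-form optimal pilot assignment vector of Theorem 1:
`p'_i = Σ_{s=0}^{i} 3^s - (N-1)/2` if `i = χ(N)`,
`p'_i = 3·((N-1)/2 - Σ_{s=0}^{i-2} 3^s)` if `i = χ(N) + 1 ≤ m-1`,
and `p'_i = 0` otherwise. -/
noncomputable def popt (m : ℕ) (N : ℤ) : Fin m → ℤ := fun i =>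
  if (i : ℕ) = chiN N then (∑ s ∈ Finset.range (chiN N + 1), 3 ^ s) - (N - 1) / 2
  else if (i : ℕ) = chiN N + 1 then
    3 * ((N - 1) / 2 - ∑ s ∈ Finset.range (chiN N), 3 ^ s)
  else 0

lemma sum_support_pair {M : Type*} [AddCommMonoid M] (g : ℕ → M) (a n : ℕ) (ha : a < n)
    (h0 : ∀ j, j ≠ a → j ≠ a + 1 → g j = 0) (h1 : a + 1 < n ∨ g (a + 1) = 0) :
    ∑ j ∈ Finset.range n, g j = g a + g (a + 1) := by
  rcases h1 with h1 | h1
  · exact Finset.sum_eq_add_of_mem a (a+1) (Finset.mem_range.2 ha) (Finset.mem_range.2 h1)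
      (by omega) (fun c _ hc => h0 c hc.1 hc.2)
  · rw [h1, add_zero]
    exact Finset.sum_eq_single_of_mem a (Finset.mem_range.2 ha)
      (fun b _ hb => by by_cases hb' : b = a + 1
                        · rw [hb', h1]
                        · exact h0 b hb hb')

lemma nat_two_mul_le (j : ℕ) : 2 * j + 1 ≤ 3 ^ j := by
  induction j with
  | zero => simp
  | succ k ih =>
    have : (1:ℕ) ≤ 3 ^ k := Nat.one_le_pow _ _ (by norm_num)
    calc 2 * (k+1) + 1 = (2*k+1) + 2 := by ring
    _ ≤ 3^k + 2 := by omega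
    _ ≤ 3^(k+1) := by rw [pow_succ]; omega

lemma keyR (i c : ℕ) : (i : ℝ) ≤ ((c : ℝ) - 1/2) + 3 ^ i / (2 * 3 ^ c) := by
  have hc : (0:ℝ) < (3:ℝ) ^ c := by positivity
  rcases le_or_gt c i with h | h
  · obtain ⟨j, rfl⟩ := Nat.exists_eq_add_of_le h
    have h3 : ((2*j+1 : ℕ) : ℝ) ≤ ((3^j : ℕ) : ℝ) := Nat.cast_le.2 (nat_two_mul_le j)
    push_cast at h3
    have hpow : (3:ℝ) ^ (c + j) = 3 ^ c * 3 ^ j := pow_add 3 c j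
    rw [hpow, mul_comm ((3:ℝ)^c), mul_div_assoc]
    have hd : (1:ℝ) ≤ (3:ℝ)^c / (2 * 3^c) * 2 := by
      have he : (3:ℝ)^c/(2*3^c) = 1/2 := by
        field_simp
      rw [he]; norm_num
    push_cast
    nlinarith [mul_le_mul_of_nonneg_right h3 (le_of_lt (show (0:ℝ) < (3:ℝ)^c / (2*3^c) by positivity))]
  · have hi : (3:ℝ)^i / (2 * 3^c) > 0 := by positivity
    have : (i:ℝ) + 1 ≤ (c:ℝ) := by exact_mod_cast h
    linarith

noncomputable def Sg (n : ℕ) : ℤ := ∑ i ∈ Finset.range n, (3:ℤ)^i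

lemma Sg_eq (n : ℕ) : 2 * Sg n + 1 = 3 ^ n := by
  induction n with
  | zero => simp [Sg]
  | succ k ih =>
    have h : Sg (k+1) = Sg k + 3^k := Finset.sum_range_succ _ _
    rw [h, pow_succ]
    linarith

noncomputable def Fopt (N : ℤ) (j : ℕ) : ℤ :=
  if j = chiN N then (∑ s ∈ Finset.range (chiN N + 1), (3:ℤ) ^ s) - (N - 1) / 2
  else if j = chiN N + 1 then 3 * ((N - 1) / 2 - ∑ s ∈ Finset.range (chiN N), (3:ℤ) ^ s)
  else 0


/-- The maximum of `C_sum` over `Ω(N_p0)` equals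
`C_0 + d·(χ + ((N_p0-1)/2 - (3^χ - 1)/2)·3^{-χ})` where `χ = χ(N_p0)`. -/
theorem max_sum_rate_value (m : ℕ) (hm : 2 ≤ m)
    (C0 d : ℝ) (hC0 : 0 < C0) (hd : 0 < d)
    (Np0 : ℤ) (hodd : Odd Np0) (h1 : 1 ≤ Np0) (h2 : Np0 ≤ 3 ^ (m - 1)) :
    IsGreatest {x : ℝ | ∃ p : Fin m → ℤ, validP p ∧ Npil p = Np0 ∧ Csum C0 d p = x}
      (C0 + d * ((chiN Np0 : ℝ) +
        (((Np0 : ℝ) - 1) / 2 - ((3 : ℝ) ^ chiN Np0 - 1) / 2) / 3 ^ chiN Np0)) := by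
  obtain ⟨k, hk⟩ := hodd
  have hMm : (Np0 - 1) / 2 ≤ Sg (m-1) := by
    have h3 := Sg_eq (m-1)
    omega
  have hmem0 : (Np0-1)/2 < Sg ((m-1)+1) := by
    have hsu : Sg (m-1+1) = Sg (m-1) + 3^(m-1) := Finset.sum_range_succ _ _
    have h3 : (0:ℤ) < 3^(m-1) := by positivity
    omega
  have hc1 : (Np0-1)/2 < Sg (chiN Np0 + 1) := by
    have h := Nat.sInf_mem (s := {k : ℕ | (Np0 - 1) / 2 < ∑ i ∈ Finset.range (k + 1), (3 : ℤ) ^ i}) ⟨m-1, hmem0⟩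
    exact h
  have hcm : chiN Np0 ≤ m - 1 :=
    Nat.sInf_le (s := {k : ℕ | (Np0 - 1) / 2 < ∑ i ∈ Finset.range (k + 1), (3 : ℤ) ^ i}) hmem0
  have hc2 : Sg (chiN Np0) ≤ (Np0-1)/2 := by
    rcases Nat.eq_zero_or_pos (chiN Np0) with h0 | h0
    · rw [h0]; simp [Sg]; omega
    · have hlt : chiN Np0 - 1 < chiN Np0 := by omega
      have hnm : ¬ ((Np0-1)/2 < Sg ((chiN Np0 - 1)+1)) := Nat.notMem_of_lt_sInf hlt
      rw [Nat.sub_add_cancel h0] at hnm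
      omega
  set c := chiN Np0 with hc
  have hcm' : c < m := by omega
  have hsucc : Sg (c+1) = Sg c + 3^c := Finset.sum_range_succ _ _
  have hS1 := Sg_eq c
  have hor : c + 1 < m ∨ (Np0-1)/2 - Sg c = 0 := by
    rcases lt_or_ge (c+1) m with h | h
    · exact Or.inl h
    · right
      have : c = m - 1 := by omega
      rw [this] at hc2 ⊢
      omega
  have hgc : Fopt Np0 c = Sg (c+1) - (Np0-1)/2 := by
    simp [Fopt, ← hc, Sg]
  have hgc1 : Fopt Np0 (c+1) = 3*((Np0-1)/2 - Sg c) := by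
    simp [Fopt, ← hc, Sg]
  have hzero : ∀ j, j ≠ c → j ≠ c + 1 → Fopt Np0 j = 0 := by
    intro j hj1 hj2
    simp [Fopt, ← hc, hj1, hj2]
  have h3cR : (0:ℝ) < (3:ℝ)^c := by positivity
  have hsuccR : ((Sg (c+1)):ℝ) = (Sg c : ℝ) + 3^c := by exact_mod_cast hsucc
  have hS1R : 2*((Sg c):ℝ) + 1 = 3^c := by exact_mod_cast hS1
  have hMR : (((Np0-1)/2 : ℤ) : ℝ) = ((Np0:ℝ) - 1)/2 := by
    have hM : Np0 = 2 * ((Np0-1)/2) + 1 := by omega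
    have := congrArg (fun z : ℤ => (z:ℝ)) hM
    push_cast at this
    linarith
  constructor
  · -- membership
    refine ⟨popt m Np0, ⟨?_, ?_⟩, ?_, ?_⟩
    · -- bounds
      intro i
      rw [show popt m Np0 i = Fopt Np0 (i:ℕ) from rfl]
      by_cases h1' : (i:ℕ) = c
      · rw [h1', hgc]
        constructor
        · omega
        · omega
      · by_cases h2' : (i:ℕ) = c + 1
        · rw [h2', hgc1]
          have hp : (3:ℤ)^(c+1) = 3*3^c := by rw [pow_succ]; ring
          constructor
          · omega
          · omega
        · rw [hzero _ h1' h2']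
          exact ⟨le_refl 0, by positivity⟩
    · -- sum = 1
      have hin : (∑ j ∈ Finset.range m, ((Fopt Np0 j : ℝ))/3^j) = 1 := by
        rw [sum_support_pair (fun j => ((Fopt Np0 j : ℝ))/3^j) c m hcm'
          (fun j hj1 hj2 => by simp [hzero j hj1 hj2])
          (by rcases hor with h | h
              · exact Or.inl h
              · right; simp [hgc1, h])]
        simp only [hgc, hgc1]
        push_cast
        rw [hsuccR]
        rw [pow_succ]
        field_simp
        ring
      exact (Fin.sum_univ_eq_sum_range (fun j => ((Fopt Np0 j : ℝ))/3^j) m).trans hin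
    · -- Npil
      show (∑ i : Fin m, popt m Np0 i) = Np0
      have hin : (∑ j ∈ Finset.range m, Fopt Np0 j) = Np0 := by
        rw [sum_support_pair (Fopt Np0) c m hcm' hzero
          (by rcases hor with h | h
              · exact Or.inl h
              · right; rw [hgc1, h]; ring)]
        rw [hgc, hgc1]
        omega
      exact (Fin.sum_univ_eq_sum_range (fun j => Fopt Np0 j) m).trans hin
    · -- Csum value
      show (∑ i : Fin m, ((popt m Np0 i : ℝ))/3^(i:ℕ) * (C0 + (i:ℕ)*d)) = _
      have hin : (∑ j ∈ Finset.range m, ((Fopt Np0 j : ℝ))/3^j * (C0 + (j:ℝ)*d))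
          = C0 + d * ((c : ℝ) + (((Np0 : ℝ) - 1) / 2 - ((3 : ℝ) ^ c - 1) / 2) / 3 ^ c) := by
        rw [sum_support_pair (fun j => ((Fopt Np0 j : ℝ))/3^j * (C0 + (j:ℝ)*d)) c m hcm'
          (fun j hj1 hj2 => by simp [hzero j hj1 hj2])
          (by rcases hor with h | h
              · exact Or.inl h
              · right; simp [hgc1, h])]
        simp only [hgc, hgc1]
        push_cast
        rw [hsuccR, hMR, pow_succ]
        have hSc : ((Sg c):ℝ) = ((3:ℝ)^c - 1)/2 := by linarith
        rw [hSc]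
        field_simp
        ring
      exact (Fin.sum_univ_eq_sum_range (fun j => ((Fopt Np0 j : ℝ))/3^j * (C0 + (j:ℝ)*d)) m).trans hin
  · -- upper bound
    rintro x ⟨p, ⟨hbnd, hsum⟩, hnp, rfl⟩
    have hterm : ∀ i ∈ Finset.univ, (p i : ℝ)/3^(i:ℕ) * (C0 + (i:ℕ)*d)
        ≤ C0 * ((p i : ℝ)/3^(i:ℕ)) + d*((c:ℝ)-1/2) * ((p i : ℝ)/3^(i:ℕ)) + d/(2*3^c) * (p i : ℝ) := by
      intro i _
      have hp0 : (0:ℝ) ≤ (p i : ℝ)/3^(i:ℕ) := by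
        have := (hbnd i).1
        have : (0:ℝ) ≤ (p i : ℝ) := by exact_mod_cast this
        positivity
      have hkey := mul_le_mul_of_nonneg_left (keyR (i:ℕ) c) hp0
      have hsplit : (p i : ℝ)/3^(i:ℕ) * (((c:ℝ) - 1/2) + 3^(i:ℕ)/(2*3^c))
          = (p i : ℝ)/3^(i:ℕ) * ((c:ℝ) - 1/2) + (p i : ℝ)/(2*3^c) := by
        have h3i : ((3:ℝ))^(i:ℕ) ≠ 0 := by positivity
        field_simp
      rw [hsplit] at hkey
      have h5 := mul_le_mul_of_nonneg_left hkey hd.le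
      have e1 : (p i : ℝ)/3^(i:ℕ) * (C0 + ((i:ℕ):ℝ)*d)
          = C0 * ((p i : ℝ)/3^(i:ℕ)) + d * ((p i : ℝ)/3^(i:ℕ) * ((i:ℕ):ℝ)) := by ring
      have e2 : d * ((p i : ℝ)/3^(i:ℕ) * ((c:ℝ) - 1/2) + (p i : ℝ)/(2*3^c))
          = d*((c:ℝ)-1/2) * ((p i : ℝ)/3^(i:ℕ)) + d/(2*3^c) * (p i : ℝ) := by ring
      rw [e2] at h5
      rw [e1]
      linarith
    calc Csum C0 d p = ∑ i : Fin m, (p i : ℝ)/3^(i:ℕ) * (C0 + (i:ℕ)*d) := rfl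
      _ ≤ ∑ i : Fin m, (C0 * ((p i : ℝ)/3^(i:ℕ)) + d*((c:ℝ)-1/2) * ((p i : ℝ)/3^(i:ℕ)) + d/(2*3^c) * (p i : ℝ)) :=
          Finset.sum_le_sum hterm
      _ = C0 * (∑ i : Fin m, (p i : ℝ)/3^(i:ℕ)) + d*((c:ℝ)-1/2) * (∑ i : Fin m, (p i : ℝ)/3^(i:ℕ))
          + d/(2*3^c) * (∑ i : Fin m, (p i : ℝ)) := by
          rw [Finset.sum_add_distrib, Finset.sum_add_distrib, Finset.mul_sum, Finset.mul_sum, Finset.mul_sum]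
      _ = C0 + d*((c:ℝ)-1/2) + d/(2*3^c) * (Np0:ℝ) := by
          have hS2 : (∑ i : Fin m, (p i : ℝ)) = (Np0:ℝ) := by
            have h' : (∑ i : Fin m, p i) = Np0 := hnp
            exact_mod_cast h'
          rw [hsum, hS2]; ring
      _ = C0 + d * ((c : ℝ) + (((Np0 : ℝ) - 1) / 2 - ((3 : ℝ) ^ c - 1) / 2) / 3 ^ c) := by
          field_simp
          ring
end

section
/- Let N_p0 be an odd integer with 1 ≤ N_p0 and N_p0 + 2 ≤ 3^{m-1}, and let p* = p'_opt(N_p0) and p** = p'_opt(N_p0 + 2) be the optimal pilot assignment vectors (given by the closed-form of Theorem 1) maximizing C_sum over Ω(N_p0) and Ω(N_p0 + 2) respectively. Then p**_i = p*_i − 1 for i = χ(N_p0), p**_i = p*_i + 3 for i = χ(N_p0) + 1, and p**_i = p*_i for all other indices i (Corollary 1). -/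
lemma lt_sum3 (k : ℕ) : (k : ℤ) < ∑ s ∈ Finset.range (k + 1), (3 : ℤ) ^ s := by
  induction k with
  | zero => simp
  | succ n ih =>
    rw [Finset.sum_range_succ]
    have h1 : (1 : ℤ) ≤ 3 ^ (n + 1) := one_le_pow₀ (by norm_num)
    push_cast
    linarith

lemma sum3_mono {a b : ℕ} (h : a ≤ b) :
    (∑ s ∈ Finset.range a, (3 : ℤ) ^ s) ≤ ∑ s ∈ Finset.range b, (3 : ℤ) ^ s :=
  Finset.sum_le_sum_of_subset_of_nonneg (Finset.range_subset_range.2 h)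
    (fun _ _ _ => by positivity)

lemma chi_nonempty (N : ℤ) :
    {k : ℕ | (N - 1) / 2 < ∑ i ∈ Finset.range (k + 1), (3 : ℤ) ^ i}.Nonempty := by
  obtain ⟨k, hk⟩ : ∃ k : ℕ, (N - 1) / 2 < (k : ℤ) + 1 := ⟨((N - 1) / 2).toNat, by omega⟩
  exact ⟨k, by have := lt_sum3 k; simp only [Set.mem_setOf_eq]; linarith⟩

lemma chi_mem (N : ℤ) : (N - 1) / 2 < ∑ i ∈ Finset.range (chiN N + 1), (3 : ℤ) ^ i :=
  Nat.sInf_mem (chi_nonempty N)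

lemma chi_le (N : ℤ) (k : ℕ)
    (hk : (N - 1) / 2 < ∑ i ∈ Finset.range (k + 1), (3 : ℤ) ^ i) : chiN N ≤ k :=
  Nat.sInf_le hk

/-- Corollary 1: the optimal vectors for pilot lengths `N_p0` and `N_p0 + 2`
are related by decreasing component `χ(N_p0)` by 1 and increasing component
`χ(N_p0) + 1` by 3, leaving all other components unchanged. -/
theorem corollary1_successive_optima (m : ℕ) (hm : 2 ≤ m)
    (Np0 : ℤ) (hodd : Odd Np0) (h1 : 1 ≤ Np0) (h2 : Np0 + 2 ≤ 3 ^ (m - 1))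
    (i : Fin m) :
    popt m (Np0 + 2) i =
      if (i : ℕ) = chiN Np0 then popt m Np0 i - 1
      else if (i : ℕ) = chiN Np0 + 1 then popt m Np0 i + 3
      else popt m Np0 i := by
  obtain ⟨t, ht⟩ := hodd
  have hh : (Np0 - 1) / 2 = t := by omega
  have hh2 : (Np0 + 2 - 1) / 2 = t + 1 := by omega
  have hmem := chi_mem Np0
  rw [hh] at hmem
  set χ := chiN Np0 with hχ
  by_cases hcase : (∑ s ∈ Finset.range (χ + 1), (3 : ℤ) ^ s) = t + 1
  · -- jump case: chiN (Np0 + 2) = χ + 1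
    have hchi' : chiN (Np0 + 2) = χ + 1 := by
      apply le_antisymm
      · apply chi_le
        rw [hh2, Finset.sum_range_succ, hcase]
        have : (0 : ℤ) < 3 ^ (χ + 1) := by positivity
        linarith
      · by_contra hlt
        push_neg at hlt
        have hm2 := chi_mem (Np0 + 2)
        rw [hh2] at hm2
        have hmono : (∑ s ∈ Finset.range (chiN (Np0 + 2) + 1), (3 : ℤ) ^ s)
            ≤ ∑ s ∈ Finset.range (χ + 1), (3 : ℤ) ^ s := sum3_mono (by omega)
        omega
    simp only [popt, hchi', hh, hh2, Finset.sum_range_succ, pow_succ] at hcase ⊢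
    generalize hA : (∑ s ∈ Finset.range χ, (3 : ℤ) ^ s) = A at *
    generalize hB : (3 : ℤ) ^ χ = B at *
    split_ifs <;> omega
  · -- regular case: chiN (Np0 + 2) = χ
    have hchi' : chiN (Np0 + 2) = χ := by
      apply le_antisymm
      · apply chi_le
        rw [hh2]
        omega
      · apply chi_le
        have hm2 := chi_mem (Np0 + 2)
        rw [hh2] at hm2
        omega
    simp only [popt, hchi', hh, hh2, Finset.sum_range_succ, pow_succ] at hcase ⊢
    generalize hA : (∑ s ∈ Finset.range χ, (3 : ℤ) ^ s) = A at *
    generalize hB : (3 : ℤ) ^ χ = B at *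
    split_ifs <;> omega
end

section
/- For every odd integer N_p0 with 1 ≤ N_p0 and N_p0 + 2 ≤ 3^{m-1}, the constrained maximum sum rate is strictly increasing in the pilot length: max_{p ∈ Ω(N_p0 + 2)} C_sum(p) > max_{p ∈ Ω(N_p0)} C_sum(p). -/
private lemma sum_update_two {m : ℕ} {M : Type*} [AddCommGroup M] (p : Fin m → ℤ)
    (j j' : Fin m) (hjj : j ≠ j') (a b : ℤ) (f : Fin m → ℤ → M) :
    ∑ i, f i (Function.update (Function.update p j a) j' b i)
      = ∑ i, f i (p i) + (f j a - f j (p j)) + (f j' b - f j' (p j')) := by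
  set q := Function.update (Function.update p j a) j' b with hqdef
  have hqj : q j = a := by simp [hqdef, Function.update_of_ne hjj]
  have hqj' : q j' = b := by simp [hqdef]
  have hq : ∀ i, i ≠ j → i ≠ j' → q i = p i := by
    intro i h1 h2
    simp [hqdef, Function.update_of_ne h2, Function.update_of_ne h1]
  have key : ∑ i, (f i (q i) - f i (p i))
      = (f j a - f j (p j)) + (f j' b - f j' (p j')) := by
    rw [← Finset.sum_subset (Finset.subset_univ ({j, j'} : Finset (Fin m)))]
    · rw [Finset.sum_pair hjj, hqj, hqj']
    · intro i _ hi
      simp only [Finset.mem_insert, Finset.mem_singleton, not_or] at hi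
      rw [hq i hi.1 hi.2, sub_self]
  have h2 := Finset.sum_sub_distrib (s := (Finset.univ : Finset (Fin m)))
    (f := fun i => f i (q i)) (g := fun i => f i (p i))
  rw [h2, sub_eq_iff_eq_add] at key
  rw [key]; abel

set_option maxHeartbeats 1000000 in
/-- The constrained maximum sum rate is strictly increasing in the pilot length:
`max_{p ∈ Ω(N_p0+2)} C_sum(p) > max_{p ∈ Ω(N_p0)} C_sum(p)`. -/
theorem max_sum_rate_strict_mono (m : ℕ) (hm : 2 ≤ m)
    (C0 d : ℝ) (hC0 : 0 < C0) (hd : 0 < d)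
    (Np0 : ℤ) (hodd : Odd Np0) (h1 : 1 ≤ Np0) (h2 : Np0 + 2 ≤ 3 ^ (m - 1))
    (V W : ℝ)
    (hV : IsGreatest {x : ℝ | ∃ p : Fin m → ℤ, validP p ∧ Npil p = Np0 ∧
      Csum C0 d p = x} V)
    (hW : IsGreatest {x : ℝ | ∃ p : Fin m → ℤ, validP p ∧ Npil p = Np0 + 2 ∧
      Csum C0 d p = x} W) :
    V < W := by
  obtain ⟨p, ⟨hbd, hcon⟩, hN, hCs⟩ := hV.1
  have hmpos : 0 < m := by omega
  set Mi : Fin m := ⟨m - 1, by omega⟩ with hMi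
  -- find j with j+1 < m, 1 ≤ p ⟨j⟩, p ⟨j+1⟩ ≤ 3^(j+1) - 3
  have hfind : ∃ j : ℕ, ∃ hj : j + 1 < m,
      1 ≤ p ⟨j, by omega⟩ ∧ p ⟨j + 1, hj⟩ ≤ 3 ^ (j + 1) - 3 := by
    by_cases hM : 3 ^ (m - 1) - 2 ≤ p Mi
    · -- contradiction case
      exfalso
      have hsum_ge : p Mi ≤ Npil p := by
        apply Finset.single_le_sum (f := fun i => p i) (fun i _ => (hbd i).1)
          (Finset.mem_univ Mi)
      have hpM : p Mi = 3 ^ (m - 1) - 2 := by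
        have : (Mi : ℕ) = m - 1 := rfl
        omega
      have hrest : ∀ i, i ≠ Mi → p i = 0 := by
        have hzero : ∑ i ∈ Finset.univ.erase Mi, p i = 0 := by
          have htot : p Mi + ∑ i ∈ Finset.univ.erase Mi, p i = ∑ i, p i := by
            exact Finset.add_sum_erase _ p (Finset.mem_univ Mi)
          have hnn : 0 ≤ ∑ i ∈ Finset.univ.erase Mi, p i :=
            Finset.sum_nonneg (fun i _ => (hbd i).1)
          have hNp : (∑ i, p i) = Np0 := hN
          omega
        intro i hi
        have := (Finset.sum_eq_zero_iff_of_nonneg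
          (fun i _ => (hbd i).1)).1 hzero i (by simp [hi])
        exact this
      have hcon' : (∑ i, (p i : ℝ) / 3 ^ (i : ℕ)) = (p Mi : ℝ) / 3 ^ (m - 1) := by
        apply Finset.sum_eq_single_of_mem Mi (Finset.mem_univ Mi)
        intro i _ hi
        rw [hrest i hi]; simp
      rw [hcon'] at hcon
      have h3pos : (0 : ℝ) < 3 ^ (m - 1) := by positivity
      rw [div_eq_one_iff_eq (ne_of_gt h3pos)] at hcon
      rw [hpM] at hcon
      push_cast at hcon
      linarith
    · push_neg at hM
      set T : Finset (Fin m) :=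
        Finset.univ.filter (fun i : Fin m => 1 ≤ p i ∧ (i : ℕ) < m - 1) with hT
      have hTne : T.Nonempty := by
        by_contra hne
        rw [Finset.not_nonempty_iff_eq_empty] at hne
        have hrest : ∀ i : Fin m, (i : ℕ) < m - 1 → p i = 0 := by
          intro i hi
          have : i ∉ T := by rw [hne]; exact Finset.notMem_empty i
          simp only [hT, Finset.mem_filter, Finset.mem_univ, true_and, not_and] at this
          have := (hbd i).1
          omega
        have hcon' : (∑ i, (p i : ℝ) / 3 ^ (i : ℕ)) = (p Mi : ℝ) / 3 ^ (m - 1) := by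
          apply Finset.sum_eq_single_of_mem Mi (Finset.mem_univ Mi)
          intro i _ hi
          have hiv : (i : ℕ) < m - 1 := by
            have : (i : ℕ) ≠ m - 1 := fun h => hi (Fin.ext h)
            omega
          rw [hrest i hiv]; simp
        rw [hcon'] at hcon
        have h3pos : (0 : ℝ) < 3 ^ (m - 1) := by positivity
        rw [div_eq_one_iff_eq (ne_of_gt h3pos)] at hcon
        have hPM : p Mi = 3 ^ (m - 1) := by exact_mod_cast hcon
        omega
      obtain ⟨J, hJT, hJmax⟩ := T.exists_max_image id hTne
      simp only [hT, Finset.mem_filter, Finset.mem_univ, true_and] at hJT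
      obtain ⟨hJ1, hJlt⟩ := hJT
      refine ⟨(J : ℕ), by omega, ?_, ?_⟩
      · have : (⟨(J : ℕ), by omega⟩ : Fin m) = J := rfl
        rw [this]; exact hJ1
      · set J' : Fin m := ⟨(J : ℕ) + 1, by omega⟩ with hJ'
        by_cases hc : (J : ℕ) + 1 = m - 1
        · have : J' = Mi := Fin.ext hc
          rw [this]
          have : (3 : ℤ) ^ ((J : ℕ) + 1) = 3 ^ (m - 1) := by rw [hc]
          omega
        · have hJ'T : J' ∉ T := by
            intro hmem
            have := hJmax J' hmem
            simp only [id] at this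
            have : (J' : ℕ) ≤ (J : ℕ) := this
            simp [hJ'] at this
          simp only [hT, Finset.mem_filter, Finset.mem_univ, true_and, not_and] at hJ'T
          have hJ'v : (J' : ℕ) = (J : ℕ) + 1 := rfl
          have hJ'lt : (J' : ℕ) < m - 1 := by omega
          have : ¬ 1 ≤ p J' := fun h => by have := hJ'T h; omega
          have hle : p J' ≤ 0 := by omega
          have : (3 : ℤ) ≤ 3 ^ ((J : ℕ) + 1) := by
            calc (3:ℤ) = 3 ^ 1 := by ring
            _ ≤ 3 ^ ((J:ℕ)+1) := pow_le_pow_right₀ (by norm_num) (by omega)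
          omega
  obtain ⟨j, hj, hpj, hpj'⟩ := hfind
  set J : Fin m := ⟨j, by omega⟩ with hJdef
  set J' : Fin m := ⟨j + 1, hj⟩ with hJ'def
  have hJJ' : J ≠ J' := by
    intro h
    have : j = j + 1 := congrArg Fin.val h
    omega
  set q : Fin m → ℤ := Function.update (Function.update p J (p J - 1)) J' (p J' + 3)
    with hqdef
  have hqj : q J = p J - 1 := by simp [hqdef, Function.update_of_ne hJJ']
  have hqj' : q J' = p J' + 3 := by simp [hqdef]
  have hqo : ∀ i, i ≠ J → i ≠ J' → q i = p i := by
    intro i ha hb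
    simp [hqdef, Function.update_of_ne hb, Function.update_of_ne ha]
  have h3j : (0 : ℝ) < 3 ^ j := by positivity
  -- q is valid
  have hqvalid : validP q := by
    constructor
    · intro i
      by_cases hi1 : i = J
      · subst hi1; rw [hqj]
        constructor
        · omega
        · have := (hbd J).2; omega
      · by_cases hi2 : i = J'
        · subst hi2; rw [hqj']
          constructor
          · have := (hbd J').1; omega
          · have : (J' : ℕ) = j + 1 := rfl
            rw [this]
            omega
        · rw [hqo i hi1 hi2]; exact hbd i
    · have := sum_update_two p J J' hJJ' (p J - 1) (p J' + 3)
        (fun i x => (x : ℝ) / 3 ^ (i : ℕ))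
      rw [hqdef, this, hcon]
      have hJv : (J : ℕ) = j := rfl
      have hJ'v : (J' : ℕ) = j + 1 := rfl
      rw [hJv, hJ'v]
      push_cast
      have hp : (3 : ℝ) ^ (j + 1) = 3 ^ j * 3 := pow_succ 3 j
      field_simp [hp]
      ring
  -- Npil q = Np0 + 2
  have hqN : Npil q = Np0 + 2 := by
    have := sum_update_two p J J' hJJ' (p J - 1) (p J' + 3) (fun _ x => x)
    unfold Npil
    rw [hqdef, this]
    unfold Npil at hN
    omega
  -- Csum q = V + d / 3^j
  have hqC : Csum C0 d q = V + d / 3 ^ j := by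
    have := sum_update_two p J J' hJJ' (p J - 1) (p J' + 3)
      (fun i x => (x : ℝ) / 3 ^ (i : ℕ) * (C0 + (i : ℕ) * d))
    unfold Csum
    rw [hqdef, this]
    unfold Csum at hCs
    rw [hCs]
    have hJv : (J : ℕ) = j := rfl
    have hJ'v : (J' : ℕ) = j + 1 := rfl
    rw [hJv, hJ'v]
    push_cast
    have hp : (3 : ℝ) ^ (j + 1) = 3 ^ j * 3 := pow_succ 3 j
    field_simp [hp]
    ring
  have hWge : Csum C0 d q ≤ W := hW.2 ⟨q, hqvalid, hqN, rfl⟩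
  have : 0 < d / 3 ^ j := by positivity
  linarith [hWge, hqC]
end

section
/- Fix an integer n with 1 ≤ n ≤ N_L and write C*_net(N, N_coh) = (1 − N/N_coh)·max_{p ∈ Ω(N)} C_sum(p). Then for every real N_coh with N_coh > Δ_n one has C*_net(2n+1, N_coh) > C*_net(2n−1, N_coh), and for every real N_coh with 0 < N_coh < Δ_n one has C*_net(2n−1, N_coh) > C*_net(2n+1, N_coh). -/
/-- The intersection point `Δ_n = 2·(2n - 1 - Σ_{i=0}^{χ(2n-1)-1} 3^i + ξ(n)) + 1`,
where `ξ(n) = 3^{χ(2n-1)}·C_{χ(2n-1)}/d` and `C_i = C_0 + i·d`. -/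
noncomputable def Delta (C0 d : ℝ) (n : ℕ) : ℝ :=
  2 * ((2 * (n : ℝ) - 1) - (∑ i ∈ Finset.range (chiN (2 * (n : ℤ) - 1)), (3 : ℝ) ^ i) +
    3 ^ chiN (2 * (n : ℤ) - 1) * (C0 + (chiN (2 * (n : ℤ) - 1) : ℝ) * d) / d) + 1


/-!
For every `k`, the tangent-line inequality `i ≤ k - 1/2 + 3^i / (2·3^k)` of the exponential gives
`C_sum(p) ≤ C_0 + d (k - 1/2 + N/(2·3^k))` for every valid `p` of pilot length `N`, and for odd `N`
and `k = χ(N) = ⌊log₃ N⌋` the vector `popt` attains this bound. The bound for `k = χ(2n-1)` is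
still attained at `N = 2n+1`: if `χ` jumps there, then `2n+1 = 3^(k+1)`, where the bounds for `k`
and `k+1` meet. So both maxima lie on one affine function of `N` of slope `d/3^k`, and
`N_coh · (C*_net(2n+1) - C*_net(2n-1)) = (d/3^k) (N_coh - Δ_n)`.
-/

open Finset

lemma two_mul_geom_sum_three {R : Type*} [CommRing R] (k : ℕ) :
    2 * ∑ i ∈ range k, (3 : R) ^ i = 3 ^ k - 1 := by
  have h := geom_sum_mul (3 : R) k
  norm_num at h
  rw [mul_comm, ← h]

lemma chiN_natCast {N : ℕ} (hN : Odd N) : chiN N = Nat.log 3 N := by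
  have hset : {k : ℕ | ((N : ℤ) - 1) / 2 < ∑ i ∈ range (k + 1), (3 : ℤ) ^ i} =
      {k : ℕ | N < 3 ^ (k + 1)} := by
    ext k
    have hsum := two_mul_geom_sum_three (R := ℤ) (k + 1)
    have hcast : (N : ℤ) < 3 ^ (k + 1) ↔ N < 3 ^ (k + 1) := by exact_mod_cast Iff.rfl
    obtain ⟨j, rfl⟩ := hN
    simp only [Set.mem_ofPred_eq, ← hcast]
    push_cast
    omega
  have hlog := Nat.lt_pow_succ_log_self (by norm_num : 1 < 3) N
  rw [chiN, hset]
  exact le_antisymm (Nat.sInf_le hlog)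
    (le_csInf ⟨_, hlog⟩ fun k hk => Nat.lt_succ_iff.1 (Nat.log_lt_of_lt_pow hN.pos.ne' hk))

lemma pow_chiN_le {N : ℕ} (hN : Odd N) : 3 ^ chiN N ≤ N := by
  rw [chiN_natCast hN]
  exact Nat.pow_log_le_self 3 hN.pos.ne'

lemma lt_pow_chiN_succ {N : ℕ} (hN : Odd N) : N < 3 ^ (chiN N + 1) := by
  rw [chiN_natCast hN]
  exact Nat.lt_pow_succ_log_self (by norm_num) N

lemma natCast_le_sub_half_add_three_pow_div (i k : ℕ) :
    (i : ℝ) ≤ k - 1 / 2 + 3 ^ i / (2 * 3 ^ k) := by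
  rcases le_or_gt k i with hki | hik
  · obtain ⟨j, rfl⟩ := Nat.exists_eq_add_of_le hki
    have hbern : 1 + (j : ℝ) * 2 ≤ (1 + 2) ^ j := one_add_mul_le_pow (by norm_num) j
    have hdiv : (3 : ℝ) ^ (k + j) / (2 * 3 ^ k) = 3 ^ j / 2 := by
      rw [pow_add]; field_simp
    rw [hdiv]; push_cast; norm_num at hbern; linarith
  · have hik' : (i : ℝ) + 1 ≤ k := by exact_mod_cast hik
    have : (0 : ℝ) ≤ 3 ^ i / (2 * 3 ^ k) := by positivity
    linarith

noncomputable def sumRateBound (C0 d : ℝ) (k : ℕ) (N : ℝ) : ℝ :=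
  C0 + d * (k - 1 / 2 + N / (2 * 3 ^ k))

lemma Csum_le_sumRateBound {m : ℕ} (C0 : ℝ) {d : ℝ} (hd : 0 ≤ d) {p : Fin m → ℤ}
    (hp : validP p) (k : ℕ) : Csum C0 d p ≤ sumRateBound C0 d k (Npil p) := by
  have hterm (i : Fin m) : (p i : ℝ) / 3 ^ (i : ℕ) * (C0 + (i : ℕ) * d) ≤
      (p i : ℝ) / 3 ^ (i : ℕ) * (C0 + (k - 1 / 2) * d) + d / (2 * 3 ^ k) * p i := by
    have hpi : (0 : ℝ) ≤ p i := by exact_mod_cast (hp.1 i).1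
    calc (p i : ℝ) / 3 ^ (i : ℕ) * (C0 + (i : ℕ) * d)
        = (p i : ℝ) / 3 ^ (i : ℕ) * C0 + (p i : ℝ) / 3 ^ (i : ℕ) * d * (i : ℕ) := by ring
      _ ≤ (p i : ℝ) / 3 ^ (i : ℕ) * C0 + (p i : ℝ) / 3 ^ (i : ℕ) * d *
          (k - 1 / 2 + 3 ^ (i : ℕ) / (2 * 3 ^ k)) := by
        gcongr
        exact natCast_le_sub_half_add_three_pow_div _ _
      _ = _ := by field_simp; ring
  calc Csum C0 d p
      ≤ ∑ i, ((p i : ℝ) / 3 ^ (i : ℕ) * (C0 + (k - 1 / 2) * d) + d / (2 * 3 ^ k) * p i) :=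
        sum_le_sum fun i _ => hterm i
    _ = (∑ i, (p i : ℝ) / 3 ^ (i : ℕ)) * (C0 + (k - 1 / 2) * d) +
        d / (2 * 3 ^ k) * ∑ i, (p i : ℝ) := by
        rw [sum_add_distrib, sum_mul, mul_sum]
    _ = sumRateBound C0 d k (Npil p) := by
        rw [hp.2, Npil, Int.cast_sum, sumRateBound]; ring

lemma sumRateBound_succ_three_pow (C0 d : ℝ) (k : ℕ) :
    sumRateBound C0 d (k + 1) (3 ^ (k + 1)) = sumRateBound C0 d k (3 ^ (k + 1)) := by
  unfold sumRateBound; push_cast; field_simp; ring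

lemma two_mul_popt_apply {m N : ℕ} (hN : Odd N) (i : Fin m) :
    2 * popt m N i = if (i : ℕ) = chiN N then (3 : ℤ) ^ (chiN N + 1) - N
      else if (i : ℕ) = chiN N + 1 then 3 * ((N : ℤ) - 3 ^ chiN N) else 0 := by
  have hsucc := two_mul_geom_sum_three (R := ℤ) (chiN N + 1)
  have hsum := two_mul_geom_sum_three (R := ℤ) (chiN N)
  obtain ⟨j, rfl⟩ := hN
  unfold popt
  push_cast at hsucc hsum ⊢
  split_ifs <;> omega

lemma chiN_lt_of_le_pow {m N : ℕ} (hN : Odd N) (hm : m ≠ 0) (hNm : N ≤ 3 ^ (m - 1)) :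
    chiN N < m := by
  have h := (pow_chiN_le hN).trans hNm
  rw [Nat.pow_le_pow_iff_right (by norm_num)] at h
  omega

lemma sum_popt_mul {m N : ℕ} (hN : Odd N) (hm : m ≠ 0) (hNm : N ≤ 3 ^ (m - 1)) (G : ℕ → ℝ) :
    ∑ i : Fin m, (popt m N i : ℝ) * G i =
      ((3 ^ (chiN N + 1) - N) * G (chiN N) + 3 * (N - 3 ^ chiN N) * G (chiN N + 1)) / 2 := by
  set k := chiN N
  have hpopt (i : Fin m) : (popt m N i : ℝ) =
      (if (i : ℕ) = k then (3 : ℝ) ^ (k + 1) - N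
        else if (i : ℕ) = k + 1 then 3 * ((N : ℝ) - 3 ^ k) else 0) / 2 := by
    have h := congrArg (Int.cast : ℤ → ℝ) (two_mul_popt_apply hN i)
    push_cast [apply_ite (Int.cast : ℤ → ℝ)] at h
    rw [← h]; ring
  simp_rw [hpopt]
  rw [Fin.sum_univ_eq_sum_range (fun j => (if j = k then (3 : ℝ) ^ (k + 1) - N
    else if j = k + 1 then 3 * (N - 3 ^ k) else 0) / 2 * G j) m]
  rw [sum_eq_add k (k + 1) (by omega)]
  · simp only [↓reduceIte, Nat.add_eq_left, one_ne_zero]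
    ring
  · intro j _ hj
    simp [hj.1, hj.2]
  · intro hk
    exact absurd (mem_range.2 (chiN_lt_of_le_pow hN hm hNm)) hk
  · intro hk
    have hkm : k = m - 1 := by
      have := chiN_lt_of_le_pow hN hm hNm
      rw [mem_range, not_lt] at hk
      omega
    have hNk : (N : ℝ) = 3 ^ k := by
      rw [hkm]; exact_mod_cast le_antisymm hNm (hkm ▸ pow_chiN_le hN)
    simp [hNk]

lemma validP_popt {m N : ℕ} (hN : Odd N) (hm : m ≠ 0) (hNm : N ≤ 3 ^ (m - 1)) :
    validP (popt m N) := by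
  refine ⟨fun i => ?_, ?_⟩
  · have h := two_mul_popt_apply hN i
    have hlo : (3 : ℤ) ^ chiN N ≤ N := by exact_mod_cast pow_chiN_le hN
    have hhi : (N : ℤ) < 3 ^ (chiN N + 1) := by exact_mod_cast lt_pow_chiN_succ hN
    have hpos : (0 : ℤ) < 3 ^ (i : ℕ) := by positivity
    rw [pow_succ] at h hhi
    split_ifs at h with hk hk1
    · rw [hk]; omega
    · rw [hk1, pow_succ]; omega
    · omega
  · have h := sum_popt_mul hN hm hNm (fun i => 1 / 3 ^ i)
    simp only [mul_one_div] at h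
    rw [h]
    field_simp
    ring

lemma Npil_popt {m N : ℕ} (hN : Odd N) (hm : m ≠ 0) (hNm : N ≤ 3 ^ (m - 1)) :
    Npil (popt m N) = N := by
  have h := sum_popt_mul hN hm hNm (fun _ => 1)
  simp only [mul_one] at h
  have hR : (Npil (popt m N) : ℝ) = N := by
    rw [Npil, Int.cast_sum, h]; ring
  exact_mod_cast hR

lemma Csum_popt {m N : ℕ} (hN : Odd N) (hm : m ≠ 0) (hNm : N ≤ 3 ^ (m - 1)) (C0 d : ℝ) :
    Csum C0 d (popt m N) = sumRateBound C0 d (chiN N) N :=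
  calc Csum C0 d (popt m N)
      = ∑ i : Fin m, (popt m N i : ℝ) * ((C0 + (i : ℕ) * d) / 3 ^ (i : ℕ)) :=
        sum_congr rfl fun i _ => by ring
    _ = sumRateBound C0 d (chiN N) N := by
        rw [sum_popt_mul hN hm hNm (fun j => (C0 + j * d) / 3 ^ j), sumRateBound]
        push_cast; field_simp; ring

theorem isGreatest_Csum {m N : ℕ} (hN : Odd N) (hm : m ≠ 0) (hNm : N ≤ 3 ^ (m - 1))
    (C0 : ℝ) {d : ℝ} (hd : 0 ≤ d) :
    IsGreatest {x : ℝ | ∃ p : Fin m → ℤ, validP p ∧ Npil p = N ∧ Csum C0 d p = x}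
      (sumRateBound C0 d (chiN N) N) := by
  refine ⟨⟨popt m N, validP_popt hN hm hNm, Npil_popt hN hm hNm, Csum_popt hN hm hNm C0 d⟩, ?_⟩
  rintro _ ⟨p, hp, hNp, rfl⟩
  have h := Csum_le_sumRateBound C0 hd hp (chiN N)
  rwa [hNp, Int.cast_natCast] at h

lemma sumRateBound_chiN_add_two (C0 d : ℝ) {N : ℕ} (hN : Odd N) :
    sumRateBound C0 d (chiN (N + 2 : ℕ)) (N + 2 : ℕ) = sumRateBound C0 d (chiN N) (N + 2 : ℕ) := by
  have hN2 : Odd (N + 2) := hN.add_even even_two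
  have hodd : Odd (3 ^ (chiN N + 1)) := Odd.pow (by decide)
  have hlt := lt_pow_chiN_succ hN
  have hle : N + 2 ≤ 3 ^ (chiN N + 1) := by
    obtain ⟨a, ha⟩ := hN; obtain ⟨b, hb⟩ := hodd; omega
  rcases hle.lt_or_eq with hlt2 | heq
  · rw [chiN_natCast hN2, Nat.log_eq_of_pow_le_of_lt_pow ((pow_chiN_le hN).trans (by omega)) hlt2]
  · rw [chiN_natCast hN2, heq, Nat.log_pow (by norm_num)]
    push_cast
    exact sumRateBound_succ_three_pow C0 d _

lemma Delta_eq (C0 d : ℝ) (n : ℕ) :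
    Delta C0 d n = 2 * (2 * n - 1) + 2 - 3 ^ chiN (2 * (n : ℤ) - 1) +
      2 * (3 ^ chiN (2 * (n : ℤ) - 1) * (C0 + chiN (2 * (n : ℤ) - 1) * d) / d) := by
  have h := two_mul_geom_sum_three (R := ℝ) (chiN (2 * (n : ℤ) - 1))
  rw [Delta]
  linear_combination -h

lemma Delta_pos {C0 d : ℝ} (hC0 : 0 ≤ C0) (hd : 0 < d) {n : ℕ} (hn : 1 ≤ n) :
    0 < Delta C0 d n := by
  have hodd : Odd (2 * n - 1) := ⟨n - 1, by omega⟩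
  have hpow : (3 : ℝ) ^ chiN (2 * (n : ℤ) - 1) ≤ 2 * n - 1 := by
    have h := pow_chiN_le hodd
    rw [← Nat.cast_le (α := ℝ)] at h
    push_cast [Nat.cast_sub (by omega : 1 ≤ 2 * n)] at h
    exact h
  have hξ : 0 ≤ 3 ^ chiN (2 * (n : ℤ) - 1) * (C0 + chiN (2 * (n : ℤ) - 1) * d) / d := by
    positivity
  have hn1 : (1 : ℝ) ≤ n := by exact_mod_cast hn
  rw [Delta_eq]
  linarith

lemma netRate_sub_eq (C0 : ℝ) {d x : ℝ} (hd : d ≠ 0) (hx : x ≠ 0) (n : ℕ) :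
    (1 - (2 * n + 1) / x) * sumRateBound C0 d (chiN (2 * (n : ℤ) - 1)) (2 * n + 1) -
      (1 - (2 * n - 1) / x) * sumRateBound C0 d (chiN (2 * (n : ℤ) - 1)) (2 * n - 1) =
    d / 3 ^ chiN (2 * (n : ℤ) - 1) * (x - Delta C0 d n) / x := by
  rw [Delta_eq, sumRateBound, sumRateBound]
  field_simp
  ring

theorem net_rate_curves_crossing_general (m : ℕ)
    (C0 d : ℝ) (hC0 : 0 < C0) (hd : 0 < d)
    (n : ℕ) (hn : 1 ≤ n) (hn' : 2 * n + 1 ≤ 3 ^ (m - 1))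
    (V1 V2 : ℝ)
    (hV1 : IsGreatest {x : ℝ | ∃ p : Fin m → ℤ, validP p ∧ Npil p = 2 * (n : ℤ) - 1 ∧
      Csum C0 d p = x} V1)
    (hV2 : IsGreatest {x : ℝ | ∃ p : Fin m → ℤ, validP p ∧ Npil p = 2 * (n : ℤ) + 1 ∧
      Csum C0 d p = x} V2) :
    (∀ Ncoh : ℝ, Delta C0 d n < Ncoh →
      (1 - (2 * (n : ℝ) - 1) / Ncoh) * V1 < (1 - (2 * (n : ℝ) + 1) / Ncoh) * V2) ∧
    (∀ Ncoh : ℝ, 0 < Ncoh → Ncoh < Delta C0 d n →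
      (1 - (2 * (n : ℝ) + 1) / Ncoh) * V2 < (1 - (2 * (n : ℝ) - 1) / Ncoh) * V1) := by
  have hm : m ≠ 0 := by rintro rfl; rw [zero_tsub, pow_zero] at hn'; omega
  have hodd : Odd (2 * n - 1) := ⟨n - 1, by omega⟩
  have hcast : (2 * (n : ℤ) - 1) = (2 * n - 1 : ℕ) := by omega
  have hcastR : (2 * (n : ℝ) - 1) = (2 * n - 1 : ℕ) := by
    push_cast [Nat.cast_sub (by omega : 1 ≤ 2 * n)]; ring
  have hsucc : 2 * n + 1 = 2 * n - 1 + 2 := by omega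
  have hV1' : V1 = sumRateBound C0 d (chiN (2 * (n : ℤ) - 1)) (2 * n - 1) := by
    have h := isGreatest_Csum hodd hm (by omega) C0 hd.le
    rw [← hcast, ← hcastR] at h
    exact hV1.unique h
  have hV2' : V2 = sumRateBound C0 d (chiN (2 * (n : ℤ) - 1)) (2 * n + 1) := by
    have h := isGreatest_Csum (hodd.add_even even_two) hm (by omega) C0 hd.le
    rw [sumRateBound_chiN_add_two C0 d hodd, ← hsucc, ← hcast] at h
    push_cast at h
    exact hV2.unique h
  rw [hV1', hV2']
  refine ⟨fun x hx => ?_, fun x hx0 hx => ?_⟩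
  · have hx0 : 0 < x := (Delta_pos hC0.le hd hn).trans hx
    rw [← sub_pos, netRate_sub_eq C0 hd.ne' hx0.ne']
    exact div_pos (mul_pos (by positivity) (sub_pos.2 hx)) hx0
  · rw [← sub_neg, netRate_sub_eq C0 hd.ne' hx0.ne']
    exact div_neg_of_neg_of_pos (mul_neg_of_pos_of_neg (by positivity) (sub_neg.2 hx)) hx0

/-- For `1 ≤ n ≤ N_L`, writing `C*_net(N, N_coh) = (1 - N/N_coh)·max_{Ω(N)} C_sum`:
for `N_coh > Δ_n` the curve for pilot length `2n+1` is strictly above the one for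
`2n-1`, and for `0 < N_coh < Δ_n` the opposite strict inequality holds. -/
theorem net_rate_curves_crossing (m : ℕ) (hm : 2 ≤ m)
    (C0 d : ℝ) (hC0 : 0 < C0) (hd : 0 < d)
    (n : ℕ) (hn : 1 ≤ n) (hn' : 2 * n + 1 ≤ 3 ^ (m - 1))
    (V1 V2 : ℝ)
    (hV1 : IsGreatest {x : ℝ | ∃ p : Fin m → ℤ, validP p ∧ Npil p = 2 * (n : ℤ) - 1 ∧
      Csum C0 d p = x} V1)
    (hV2 : IsGreatest {x : ℝ | ∃ p : Fin m → ℤ, validP p ∧ Npil p = 2 * (n : ℤ) + 1 ∧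
      Csum C0 d p = x} V2) :
    (∀ Ncoh : ℝ, Delta C0 d n < Ncoh →
      (1 - (2 * (n : ℝ) - 1) / Ncoh) * V1 < (1 - (2 * (n : ℝ) + 1) / Ncoh) * V2) ∧
    (∀ Ncoh : ℝ, 0 < Ncoh → Ncoh < Delta C0 d n →
      (1 - (2 * (n : ℝ) + 1) / Ncoh) * V2 < (1 - (2 * (n : ℝ) - 1) / Ncoh) * V1) :=
  net_rate_curves_crossing_general m C0 d hC0 hd n hn hn' V1 V2 hV1 hV2
end

section
/- Let n be an integer with 0 ≤ n ≤ N_L and let N_coh be a real number satisfying Δ_n ≤ N_coh < Δ_{n+1} (with the conventions Δ_0 = 0 and Δ_{N_L + 1} = +∞). Then the vector p'_opt(2n+1) (the closed-form maximizer of C_sum over Ω(2n+1) from Theorem 1) maximizes the net rate over all valid pilot assignment vectors: C_net(p, N_coh) ≤ C_net(p'_opt(2n+1), N_coh) for every p ∈ P_L; in particular the optimal pilot length is 2n+1 (Theorem 2). -/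
/-- The net rate `C_net(p, N_coh) = (1 - N_pil(p)/N_coh)·C_sum(p)`. -/
noncomputable def Cnet {m : ℕ} (C0 d : ℝ) (p : Fin m → ℤ) (Ncoh : ℝ) : ℝ :=
  (1 - (Npil p : ℝ) / Ncoh) * Csum C0 d p


/-!
Every valid `p` has odd pilot length `2k + 1 ≤ 3^{m-1}`, since `Σ p_i 3^{m-1-i} = 3^{m-1}`.
Theorem 1 bounds `C_sum(p) ≤ C_0 + d (c - 1/2 + (2k+1)/(2·3^c))` for every depth `c`, with equality
for `p'_opt(2k+1)` at `c = χ(2k+1) = log₃(2k+1)`. Hence if `2k + 1 ≤ N_coh` the net rate of `p` is at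
most the net rate `R(k)` of `p'_opt(2k+1)`, and otherwise (negative first factor, `C_sum ≥ C_0`) at
most `(1 - 1/N_coh) C_0 = R(0)`. Finally `R(k+1) - R(k)` has the sign of `N_coh - Δ_{k+1}` and `Δ` is
nondecreasing, so `R` increases up to `n` and decreases from `n` on.
-/

open Finset

theorem geom_sum_three_mul_two {R : Type*} [Ring R] (j : ℕ) :
    (∑ i ∈ range j, (3 : R) ^ i) * 2 = 3 ^ j - 1 := by
  have h := geom_sum_mul (3 : R) j
  norm_num at h
  exact h

theorem chiN_two_mul_add_one (k : ℕ) : chiN (2 * (k : ℤ) + 1) = Nat.log 3 (2 * k + 1) := by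
  suffices h : {j : ℕ | (2 * (k : ℤ) + 1 - 1) / 2 < ∑ i ∈ range (j + 1), (3 : ℤ) ^ i}
      = Set.Ici (Nat.log 3 (2 * k + 1)) by
    rw [chiN, h, csInf_Ici]
  ext j
  have hgeom := geom_sum_three_mul_two (R := ℤ) (j + 1)
  have hlog := Nat.log_lt_iff_lt_pow (b := 3) (x := j + 1) (y := 2 * k + 1) (by norm_num) (by omega)
  have hcast : (2 * k + 1 < 3 ^ (j + 1)) ↔ (2 * (k : ℤ) + 1 < 3 ^ (j + 1)) := by
    exact_mod_cast Iff.rfl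
  simp only [Set.mem_ofPred_eq, Set.mem_Ici]
  omega

theorem log_three_two_mul_add_three (k : ℕ) :
    Nat.log 3 (2 * k + 3) = Nat.log 3 (2 * k + 1) ∨
      Nat.log 3 (2 * k + 3) = Nat.log 3 (2 * k + 1) + 1 ∧
        3 ^ (Nat.log 3 (2 * k + 1) + 1) = 2 * k + 3 := by
  set c := Nat.log 3 (2 * k + 1)
  have hlow : 3 ^ c ≤ 2 * k + 1 := Nat.pow_log_le_self 3 (by omega)
  have hhigh : 2 * k + 1 < 3 ^ (c + 1) := Nat.lt_pow_succ_log_self (by norm_num) _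
  rcases lt_or_ge (2 * k + 3) (3 ^ (c + 1)) with h | h
  · exact Or.inl (Nat.log_eq_of_pow_le_of_lt_pow (by omega) h)
  · -- `3 ^ (c + 1)` is odd and lies in `(2k + 1, 2k + 3]`
    have hodd := Nat.odd_iff.mp (Odd.pow (by decide) : Odd (3 ^ (c + 1)))
    have heq : 3 ^ (c + 1) = 2 * k + 3 := by omega
    refine Or.inr ⟨Nat.log_eq_of_pow_le_of_lt_pow heq.le ?_, heq⟩
    rw [pow_succ, heq]
    omega

namespace validP

variable {m : ℕ} {p : Fin m → ℤ}

theorem sum_mul_three_pow_eq (hv : validP p) :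
    ∑ i : Fin m, p i * 3 ^ (m - 1 - i) = 3 ^ (m - 1) := by
  have hpow (i : Fin m) : (3 : ℝ) ^ (m - 1) = 3 ^ (i : ℕ) * 3 ^ (m - 1 - i) := by
    rw [← pow_add]; congr 1; omega
  have hreal : ∑ i : Fin m, (p i : ℝ) * 3 ^ (m - 1 - i) = 3 ^ (m - 1) := by
    calc ∑ i : Fin m, (p i : ℝ) * 3 ^ (m - 1 - i)
        = (∑ i : Fin m, (p i : ℝ) / 3 ^ (i : ℕ)) * 3 ^ (m - 1) := by
          rw [sum_mul]
          refine sum_congr rfl fun i _ => ?_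
          rw [hpow i]
          field_simp
      _ = 3 ^ (m - 1) := by rw [hv.2, one_mul]
  exact_mod_cast hreal

theorem exists_Npil_eq_two_mul_add_one (hv : validP p) :
    ∃ k : ℕ, k ≤ (3 ^ (m - 1) - 1) / 2 ∧ Npil p = 2 * k + 1 := by
  have hsum := hv.sum_mul_three_pow_eq
  -- each `3 ^ j - 1` is even, so `Npil p ≡ 3 ^ (m - 1) ≡ 1 (mod 2)`
  have heven : (2 : ℤ) ∣ 3 ^ (m - 1) - Npil p := by
    rw [← hsum, Npil, ← sum_sub_distrib]
    refine dvd_sum fun i _ => ⟨p i * ∑ s ∈ range (m - 1 - i), (3 : ℤ) ^ s, ?_⟩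
    rw [← mul_sub_one, ← geom_sum_three_mul_two]
    ring
  have hodd := Int.odd_iff.mp (Odd.pow (by decide) : Odd ((3 : ℤ) ^ (m - 1)))
  have hnonneg : 0 ≤ Npil p := sum_nonneg fun i _ => (hv.1 i).1
  have hle : Npil p ≤ 3 ^ (m - 1) := by
    rw [← hsum, Npil]
    exact sum_le_sum fun i _ => le_mul_of_one_le_right (hv.1 i).1 (one_le_pow₀ (by norm_num))
  have hcast : ((3 ^ (m - 1) : ℕ) : ℤ) = 3 ^ (m - 1) := by push_cast; rfl
  refine ⟨((Npil p - 1) / 2).toNat, ?_, ?_⟩ <;> omega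

end validP

/-- The value of `C_sum` at the optimum of Theorem 1, for pilot length `N` and `χ(N) = c`. -/
noncomputable def csumBound (C0 d : ℝ) (c : ℕ) (N : ℝ) : ℝ :=
  C0 + d * (c - 1 / 2 + N / (2 * 3 ^ c))

theorem natCast_div_three_pow_le (i c : ℕ) :
    (i : ℝ) / 3 ^ i ≤ (c - 1 / 2) / 3 ^ i + 1 / (2 * 3 ^ c) := by
  rcases lt_or_ge i c with hic | hci
  · have hi : (i : ℝ) + 1 ≤ c := by exact_mod_cast hic
    have h : (i : ℝ) / 3 ^ i ≤ (c - 1 / 2) / 3 ^ i := by gcongr; linarith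
    have : (0 : ℝ) < 1 / (2 * 3 ^ c) := by positivity
    linarith
  · obtain ⟨t, rfl⟩ := Nat.exists_eq_add_of_le hci
    have hbern : 1 + (t : ℝ) * 2 ≤ 3 ^ t := by
      have := one_add_mul_le_pow (a := (2 : ℝ)) (by norm_num) t
      norm_num at this
      linarith
    rw [div_add_div _ _ (by positivity) (by positivity), div_le_div_iff₀ (by positivity) (by positivity),
      pow_add]
    push_cast
    have hX : (0 : ℝ) < 3 ^ c := by positivity
    have hY : (0 : ℝ) < 3 ^ t := by positivity
    nlinarith [mul_le_mul_of_nonneg_left hbern (by positivity : (0 : ℝ) ≤ 3 ^ c * 3 ^ c * 3 ^ t)]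

namespace validP

variable {m : ℕ} {p : Fin m → ℤ}

theorem Csum_eq (C0 d : ℝ) (hv : validP p) :
    Csum C0 d p = C0 + d * ∑ i, (p i : ℝ) * (i : ℕ) / 3 ^ (i : ℕ) := by
  calc Csum C0 d p
      = C0 * ∑ i, (p i : ℝ) / 3 ^ (i : ℕ) + d * ∑ i, (p i : ℝ) * (i : ℕ) / 3 ^ (i : ℕ) := by
        rw [Csum, mul_sum, mul_sum, ← sum_add_distrib]
        exact sum_congr rfl fun i _ => by ring
    _ = _ := by rw [hv.2, mul_one]

theorem C0_le_Csum {C0 d : ℝ} (hd : 0 ≤ d) (hv : validP p) : C0 ≤ Csum C0 d p := by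
  rw [hv.Csum_eq]
  have : ∀ i : Fin m, 0 ≤ (p i : ℝ) * (i : ℕ) / 3 ^ (i : ℕ) := fun i => by
    have : (0 : ℝ) ≤ p i := by exact_mod_cast (hv.1 i).1
    positivity
  nlinarith [sum_nonneg fun i (_ : i ∈ univ) => this i]

/-- Theorem 1 of the paper: the bound holds at every depth `c` and is attained at `c = χ(N)`. -/
theorem Csum_le_csumBound {C0 d : ℝ} (hd : 0 ≤ d) (hv : validP p) (c : ℕ) :
    Csum C0 d p ≤ csumBound C0 d c (Npil p) := by
  have hweighted : ∑ i, (p i : ℝ) * (i : ℕ) / 3 ^ (i : ℕ)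
      ≤ ∑ i, (p i : ℝ) * ((c - 1 / 2) / 3 ^ (i : ℕ) + 1 / (2 * 3 ^ c)) := by
    refine sum_le_sum fun i _ => ?_
    rw [mul_div_assoc]
    exact mul_le_mul_of_nonneg_left (natCast_div_three_pow_le i c) (by exact_mod_cast (hv.1 i).1)
  have hsplit : ∑ i, (p i : ℝ) * ((c - 1 / 2) / 3 ^ (i : ℕ) + 1 / (2 * 3 ^ c))
      = (c - 1 / 2) * ∑ i, (p i : ℝ) / 3 ^ (i : ℕ) + (Npil p : ℝ) / (2 * 3 ^ c) := by
    rw [Npil, mul_sum, Int.cast_sum, sum_div, ← sum_add_distrib]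
    refine sum_congr rfl fun i _ => ?_
    ring
  rw [hsplit, hv.2, mul_one] at hweighted
  rw [hv.Csum_eq, csumBound]
  gcongr

end validP

section popt

variable {m k : ℕ}

theorem popt_two_mul_add_one_apply (i : Fin m) :
    popt m (2 * (k : ℤ) + 1) i =
      if (i : ℕ) = Nat.log 3 (2 * k + 1) then
        ∑ s ∈ range (Nat.log 3 (2 * k + 1) + 1), (3 : ℤ) ^ s - k
      else if (i : ℕ) = Nat.log 3 (2 * k + 1) + 1 then
        3 * (k - ∑ s ∈ range (Nat.log 3 (2 * k + 1)), (3 : ℤ) ^ s)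
      else 0 := by
  rw [popt, chiN_two_mul_add_one, show (2 * (k : ℤ) + 1 - 1) / 2 = k by omega]

theorem sum_popt_two_mul_add_one {M : Type*} [AddCommMonoid M] (hm : 0 < m)
    (hk : k ≤ (3 ^ (m - 1) - 1) / 2) (g : ℕ → ℤ → M) (hg : ∀ j, g j 0 = 0) :
    ∑ i : Fin m, g i (popt m (2 * (k : ℤ) + 1) i) =
      g (Nat.log 3 (2 * k + 1)) (∑ s ∈ range (Nat.log 3 (2 * k + 1) + 1), (3 : ℤ) ^ s - k) +
        g (Nat.log 3 (2 * k + 1) + 1) (3 * (k - ∑ s ∈ range (Nat.log 3 (2 * k + 1)), (3 : ℤ) ^ s)) := by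
  set c := Nat.log 3 (2 * k + 1)
  have hpos : 0 < 3 ^ (m - 1) := by positivity
  have hle : 2 * k + 1 ≤ 3 ^ (m - 1) := by omega
  have hcm : c ≤ m - 1 := by
    simpa [Nat.log_pow] using Nat.log_mono_right (b := 3) hle
  simp only [popt_two_mul_add_one_apply]
  refine (Fin.sum_univ_eq_sum_range (fun j => g j (if j = c then _ else if j = c + 1 then _ else 0))
    m).trans ?_
  rw [sum_eq_add c (c + 1) (by omega), if_pos rfl, if_neg (show c + 1 ≠ c by omega), if_pos rfl]
  · rintro j - ⟨hjc, hjc'⟩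
    rw [if_neg hjc, if_neg hjc', hg]
  · intro hc
    exact absurd (mem_range.mpr (by omega)) hc
  · -- the entry at depth `c + 1 = m` falls outside the vector, but it vanishes: `2k + 1 = 3 ^ c`
    intro hc
    have hceq : c = m - 1 := by simp only [mem_range] at hc; omega
    have h3c : 3 ^ c ≤ 2 * k + 1 := Nat.pow_log_le_self 3 (by omega)
    have hgeom := geom_sum_three_mul_two (R := ℤ) c
    have hpow : 3 ^ c = 2 * k + 1 := by rw [hceq] at h3c ⊢; omega
    have hpowZ : (3 : ℤ) ^ c = 2 * k + 1 := by exact_mod_cast hpow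
    rw [if_neg (show c + 1 ≠ c by omega), if_pos rfl, show 3 * ((k : ℤ) - ∑ s ∈ range c, 3 ^ s) = 0 by omega, hg]

theorem Npil_popt_two_mul_add_one (hm : 0 < m) (hk : k ≤ (3 ^ (m - 1) - 1) / 2) :
    Npil (popt m (2 * (k : ℤ) + 1)) = 2 * k + 1 := by
  rw [Npil, sum_popt_two_mul_add_one hm hk (fun _ x => x) fun _ => rfl, sum_range_succ]
  have := geom_sum_three_mul_two (R := ℤ) (Nat.log 3 (2 * k + 1))
  linear_combination (-1 : ℤ) * this

theorem Csum_popt_two_mul_add_one (C0 d : ℝ) (hm : 0 < m) (hk : k ≤ (3 ^ (m - 1) - 1) / 2) :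
    Csum C0 d (popt m (2 * (k : ℤ) + 1)) = csumBound C0 d (Nat.log 3 (2 * k + 1)) (2 * k + 1) := by
  rw [Csum, sum_popt_two_mul_add_one hm hk (fun j x => (x : ℝ) / 3 ^ j * (C0 + j * d))
    fun _ => by simp, csumBound]
  push_cast
  rw [sum_range_succ, pow_succ]
  have := geom_sum_three_mul_two (R := ℝ) (Nat.log 3 (2 * k + 1))
  field_simp
  linear_combination (-d) * this

end popt

/-- The net rate of `p'_opt(2k + 1)`, as a function of `k`. -/
noncomputable def optNetRate (C0 d Ncoh : ℝ) (k : ℕ) : ℝ :=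
  (1 - (2 * k + 1) / Ncoh) * csumBound C0 d (Nat.log 3 (2 * k + 1)) (2 * k + 1)

theorem Cnet_popt_two_mul_add_one {m k : ℕ} (C0 d Ncoh : ℝ) (hm : 0 < m)
    (hk : k ≤ (3 ^ (m - 1) - 1) / 2) :
    Cnet C0 d (popt m (2 * (k : ℤ) + 1)) Ncoh = optNetRate C0 d Ncoh k := by
  rw [Cnet, Npil_popt_two_mul_add_one hm hk, Csum_popt_two_mul_add_one C0 d hm hk, optNetRate]
  push_cast
  rfl

theorem validP.Cnet_le_max {m k : ℕ} {p : Fin m → ℤ} {C0 d Ncoh : ℝ} (hC0 : 0 ≤ C0) (hd : 0 ≤ d)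
    (hNcoh : 0 < Ncoh) (hv : validP p) (hk : Npil p = 2 * k + 1) :
    Cnet C0 d p Ncoh ≤ max (optNetRate C0 d Ncoh k) (optNetRate C0 d Ncoh 0) := by
  have hNpil : (Npil p : ℝ) = 2 * k + 1 := by exact_mod_cast hk
  rw [Cnet, hNpil]
  rcases le_or_gt (2 * (k : ℝ) + 1) Ncoh with hfit | hlong
  · have hfactor : 0 ≤ 1 - (2 * (k : ℝ) + 1) / Ncoh := by
      rw [sub_nonneg, div_le_one hNcoh]; exact hfit
    refine le_max_of_le_left ?_
    rw [optNetRate, ← hNpil]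
    exact mul_le_mul_of_nonneg_left (hv.Csum_le_csumBound hd _) (by rwa [hNpil])
  · -- a negative factor is best paired with the smallest sum rate `C0 = C_sum(p'_opt(1))`
    have hfactor : 1 - (2 * (k : ℝ) + 1) / Ncoh < 0 := by
      rw [sub_neg, one_lt_div hNcoh]; exact hlong
    refine le_max_of_le_right ?_
    have hone : (1 : ℝ) / Ncoh ≤ (2 * k + 1) / Ncoh := by gcongr; linarith [k.cast_nonneg (α := ℝ)]
    calc (1 - (2 * (k : ℝ) + 1) / Ncoh) * Csum C0 d p
        ≤ (1 - (2 * (k : ℝ) + 1) / Ncoh) * C0 :=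
          mul_le_mul_of_nonpos_left (hv.C0_le_Csum hd) hfactor.le
      _ ≤ optNetRate C0 d Ncoh 0 := by
          have hzero : optNetRate C0 d Ncoh 0 = (1 - 1 / Ncoh) * C0 := by
            norm_num [optNetRate, csumBound]
          rw [hzero]
          exact mul_le_mul_of_nonneg_right (by linarith) hC0

section Delta

variable {C0 d : ℝ}

theorem Delta_succ (C0 d : ℝ) (k : ℕ) :
    Delta C0 d (k + 1) = 2 * ((2 * k + 1) - ((3 : ℝ) ^ Nat.log 3 (2 * k + 1) - 1) / 2 +
      3 ^ Nat.log 3 (2 * k + 1) * (C0 + Nat.log 3 (2 * k + 1) * d) / d) + 1 := by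
  have harg : 2 * ((k + 1 : ℕ) : ℤ) - 1 = 2 * k + 1 := by push_cast; ring
  have hgeom := geom_sum_three_mul_two (R := ℝ) (Nat.log 3 (2 * k + 1))
  rw [Delta, harg, chiN_two_mul_add_one, eq_div_of_mul_eq two_ne_zero hgeom]
  push_cast
  ring

/-- `Δ_{k+1}` is where the net rates of pilot lengths `2k + 1` and `2k + 3` cross. -/
theorem optNetRate_succ_sub (Ncoh : ℝ) (hd : d ≠ 0) (hNcoh : Ncoh ≠ 0) (k : ℕ) :
    optNetRate C0 d Ncoh (k + 1) - optNetRate C0 d Ncoh k =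
      d / (Ncoh * 3 ^ Nat.log 3 (2 * k + 1)) * (Ncoh - Delta C0 d (k + 1)) := by
  rw [optNetRate, optNetRate, csumBound, csumBound, Delta_succ, show 2 * (k + 1) + 1 = 2 * k + 3 by ring]
  push_cast
  rcases log_three_two_mul_add_three k with hlog | ⟨hlog, hpow⟩
  · rw [hlog]
    field_simp
    ring
  · have hpowR : (3 : ℝ) ^ Nat.log 3 (2 * k + 1) * 3 = 2 * k + 3 := by
      rw [← pow_succ]; exact_mod_cast hpow
    have hk : (k : ℝ) = (3 ^ Nat.log 3 (2 * k + 1) * 3 - 3) / 2 := by linarith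
    rw [hlog, pow_succ, hpowR]
    push_cast
    rw [hk]
    field_simp
    ring

theorem monotone_Delta_succ (hC0 : 0 ≤ C0) (hd : 0 < d) : Monotone fun k => Delta C0 d (k + 1) := by
  refine monotone_nat_of_le_succ fun k => ?_
  simp only [Delta_succ, show 2 * (k + 1) + 1 = 2 * k + 3 by ring]
  push_cast
  rcases log_three_two_mul_add_three k with hlog | ⟨hlog, -⟩
  · rw [hlog]
    linarith
  · rw [hlog, pow_succ]
    push_cast
    set X : ℝ := 3 ^ Nat.log 3 (2 * k + 1)
    have hX : 0 < X := by positivity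
    have hCX : 0 ≤ X * C0 / d := by positivity
    have hcX : 0 ≤ X * Nat.log 3 (2 * k + 1) := by positivity
    have hsplit : X * 3 * (C0 + (Nat.log 3 (2 * k + 1) + 1) * d) / d
        = 3 * (X * C0 / d) + 3 * (X * Nat.log 3 (2 * k + 1)) + 3 * X := by
      field_simp
      ring
    have hsplit' : X * (C0 + Nat.log 3 (2 * k + 1) * d) / d
        = X * C0 / d + X * Nat.log 3 (2 * k + 1) := by
      field_simp
    rw [hsplit, hsplit']
    linarith

end Delta

theorem le_of_le_succ_of_succ_le {β : Type*} [Preorder β] {f : ℕ → β} {n N k : ℕ}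
    (hup : ∀ i < n, f i ≤ f (i + 1)) (hdown : ∀ i, n ≤ i → i < N → f (i + 1) ≤ f i) (hk : k ≤ N) :
    f k ≤ f n := by
  rcases le_total k n with hkn | hnk
  · refine monotoneOn_of_le_succ Set.ordConnected_Iic (fun i _ _ hi => ?_) hkn le_rfl hkn
    rw [Set.mem_Iic, Order.succ_eq_add_one] at hi
    rw [Order.succ_eq_add_one]
    exact hup i hi
  · refine antitoneOn_of_succ_le Set.ordConnected_Icc (fun i _ hi hi' => ?_) ⟨le_rfl, hnk.trans hk⟩
      ⟨hnk, hk⟩ hnk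
    rw [Set.mem_Icc, Order.succ_eq_add_one] at hi'
    rw [Order.succ_eq_add_one]
    exact hdown i hi.1 hi'.2

theorem optNetRate_le_of_Delta_le_of_lt_Delta {C0 d Ncoh : ℝ} (hC0 : 0 ≤ C0) (hd : 0 < d)
    (hNcoh : 0 < Ncoh) {n N : ℕ} (hlow : 1 ≤ n → Delta C0 d n ≤ Ncoh)
    (hhigh : n + 1 ≤ N → Ncoh < Delta C0 d (n + 1)) {k : ℕ} (hk : k ≤ N) :
    optNetRate C0 d Ncoh k ≤ optNetRate C0 d Ncoh n := by
  have hmono := monotone_Delta_succ hC0 hd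
  refine le_of_le_succ_of_succ_le (fun i hi => ?_) (fun i hi hiN => ?_) hk
  · have hΔ : Delta C0 d (i + 1) ≤ Ncoh := by
      obtain ⟨j, rfl⟩ := Nat.exists_eq_add_of_lt hi
      exact (hmono (Nat.le_add_right i j)).trans (hlow (by omega))
    rw [← sub_nonneg, optNetRate_succ_sub Ncoh hd.ne' hNcoh.ne']
    exact mul_nonneg (by positivity) (sub_nonneg.mpr hΔ)
  · have hΔ : Ncoh < Delta C0 d (i + 1) := (hhigh (by omega)).trans_le (hmono hi)
    rw [← sub_nonpos, optNetRate_succ_sub Ncoh hd.ne' hNcoh.ne']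
    exact mul_nonpos_of_nonneg_of_nonpos (by positivity) (sub_nonpos.mpr hΔ.le)

/-- Theorem 2: if `Δ_n ≤ N_coh < Δ_{n+1}` (with the conventions `Δ_0 = 0` and
`Δ_{N_L+1} = +∞`, where `N_L = (3^{m-1}-1)/2`), then `p'_opt(2n+1)` maximizes the
net rate over all valid pilot assignment vectors; in particular the optimal pilot
length is `2n+1`. -/
theorem theorem2_optimal_pilot_length (m : ℕ) (hm : 2 ≤ m)
    (C0 d : ℝ) (hC0 : 0 < C0) (hd : 0 < d)
    (n : ℕ) (hn : n ≤ (3 ^ (m - 1) - 1) / 2)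
    (Ncoh : ℝ) (hNcoh : 0 < Ncoh)
    (hlow : 1 ≤ n → Delta C0 d n ≤ Ncoh)
    (hhigh : n + 1 ≤ (3 ^ (m - 1) - 1) / 2 → Ncoh < Delta C0 d (n + 1)) :
    Npil (popt m (2 * (n : ℤ) + 1)) = 2 * (n : ℤ) + 1 ∧
    ∀ p : Fin m → ℤ, validP p →
      Cnet C0 d p Ncoh ≤ Cnet C0 d (popt m (2 * (n : ℤ) + 1)) Ncoh := by
  have hm_pos : 0 < m := by omega
  refine ⟨Npil_popt_two_mul_add_one hm_pos hn, fun p hv => ?_⟩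
  obtain ⟨k, hk, hNpil⟩ := hv.exists_Npil_eq_two_mul_add_one
  rw [Cnet_popt_two_mul_add_one C0 d Ncoh hm_pos hn]
  have hopt {j : ℕ} (hj : j ≤ (3 ^ (m - 1) - 1) / 2) :=
    optNetRate_le_of_Delta_le_of_lt_Delta hC0.le hd hNcoh hlow hhigh hj
  exact (hv.Cnet_le_max hC0.le hd.le hNcoh hNpil).trans (max_le (hopt hk) (hopt (Nat.zero_le _)))
end
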